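/- Let σ > 0, k > 0, 0 < μ̄ < min(σ√(π/2), k). For μ ∈ ℝ, define E(μ) = 1/2 + (μ̄/(2k))·(1 − 2Φ(−μ/σ)). Then for all μ with 0 ≤ μ ≤ k, (μ + k)(1 − E(μ)) ≥ (k − μ)E(μ), i.e., the profiled regret of the Γ-PER rule on [0,k] equals (μ + k)(1 − E(μ)). -/

import Mathlib

/-!
With `t = μ / σ`, the inequality reduces to `μ̄ (Φ(t) - Φ(-t)) ≤ μ`. The standard normal density
is at most `1 / √(2π)`, so `Φ(t) - Φ(-t) ≤ 2t / √(2π) = t / √(π/2)`, and `μ̄ ≤ σ √(π/2)` gives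
`μ̄ t / √(π/2) ≤ μ`.
-/

/-- The standard normal cumulative distribution function. -/
noncomputable def Phi (x : ℝ) : ℝ :=
  ∫ t in Set.Iic x, ProbabilityTheory.gaussianPDFReal 0 1 t

open MeasureTheory ProbabilityTheory NNReal Real

lemma gaussianPDFReal_le_inv_sqrt (μ : ℝ) (v : ℝ≥0) (x : ℝ) :
    gaussianPDFReal μ v x ≤ (√(2 * π * v))⁻¹ := by
  rw [gaussianPDFReal_def]
  refine mul_le_of_le_one_right (by positivity) (exp_le_one_iff.mpr ?_)
  exact div_nonpos_of_nonpos_of_nonneg (neg_nonpos.mpr (sq_nonneg _)) (by positivity)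

lemma gaussianPDFReal_zero_neg (v : ℝ≥0) (x : ℝ) :
    gaussianPDFReal 0 v (-x) = gaussianPDFReal 0 v x := by
  simp [gaussianPDFReal_def]

lemma Phi_neg (t : ℝ) : Phi (-t) = 1 - Phi t := by
  have hint : Integrable (gaussianPDFReal 0 1) := integrable_gaussianPDFReal 0 1
  have hreflect : Phi (-t) = ∫ x in Set.Ioi t, gaussianPDFReal 0 1 x := by
    simp_rw [Phi, ← integral_comp_neg_Ioi, gaussianPDFReal_zero_neg]
  have hsplit : Phi t + ∫ x in Set.Ioi t, gaussianPDFReal 0 1 x = 1 := by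
    rw [Phi, ← setIntegral_union (Set.Iic_disjoint_Ioi le_rfl)
      measurableSet_Ioi hint.integrableOn hint.integrableOn, Set.Iic_union_Ioi, setIntegral_univ,
      integral_gaussianPDFReal_eq_one 0 one_ne_zero]
  linarith

lemma Phi_sub_le {a b : ℝ} (hab : a ≤ b) : Phi b - Phi a ≤ (b - a) / √(2 * π) := by
  have hint : Integrable (gaussianPDFReal 0 1) := integrable_gaussianPDFReal 0 1
  calc Phi b - Phi a = ∫ x in Set.Ioc a b, gaussianPDFReal 0 1 x := by
        rw [Phi, Phi, intervalIntegral.integral_Iic_sub_Iic hint.integrableOn hint.integrableOn,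
          intervalIntegral.integral_of_le hab]
    _ ≤ ∫ _ in Set.Ioc a b, (√(2 * π))⁻¹ := by
        refine setIntegral_mono_on hint.integrableOn (integrableOn_const (by simp) enorm_ne_top)
          measurableSet_Ioc fun x _ => ?_
        simpa using gaussianPDFReal_le_inv_sqrt 0 1 x
    _ = (b - a) / √(2 * π) := by
        rw [setIntegral_const, volume_real_Ioc_of_le hab, smul_eq_mul, div_eq_mul_inv]

lemma one_sub_two_mul_Phi_neg_le {t : ℝ} (ht : 0 ≤ t) : 1 - 2 * Phi (-t) ≤ t / √(π / 2) := by
  have hsqrt : √(2 * π) = 2 * √(π / 2) := by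
    rw [show 2 * π = 2 ^ 2 * (π / 2) by ring, sqrt_mul (by positivity), sqrt_sq zero_le_two]
  have h := Phi_sub_le (neg_le_self ht)
  rw [Phi_neg t, hsqrt] at h
  rw [Phi_neg]
  calc 1 - 2 * (1 - Phi t) = Phi t - (1 - Phi t) := by ring
    _ ≤ (t - -t) / (2 * √(π / 2)) := h
    _ = t / √(π / 2) := by field_simp; ring

/-- for `0 < μ̄ < min(σ√(π/2), k)` and
`E(μ) = 1/2 + (μ̄/(2k))(1 − 2Φ(−μ/σ))`, for all `μ ∈ [0, k]`,
`(μ + k)(1 − E(μ)) ≥ (k − μ)E(μ)`. -/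
theorem per_profiled_regret_branch (σ k μbar : ℝ) (hσ : 0 < σ) (hk : 0 < k)
    (hμbar0 : 0 < μbar)
    (hμbar : μbar < min (σ * Real.sqrt (Real.pi / 2)) k)
    (E : ℝ → ℝ)
    (hE : ∀ μ, E μ = 1 / 2 + (μbar / (2 * k)) * (1 - 2 * Phi (-μ / σ))) :
    ∀ μ ∈ Set.Icc (0:ℝ) k, (k - μ) * E μ ≤ (μ + k) * (1 - E μ) := by
  rintro μ ⟨hμ0, -⟩
  have hkey : μbar * (1 - 2 * Phi (-μ / σ)) ≤ μ := by
    rw [neg_div]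
    calc μbar * (1 - 2 * Phi (-(μ / σ))) ≤ μbar * (μ / σ / √(π / 2)) :=
          mul_le_mul_of_nonneg_left (one_sub_two_mul_Phi_neg_le (by positivity)) hμbar0.le
      _ = μ * (μbar / (σ * √(π / 2))) := by field_simp
      _ ≤ μ * 1 := by
          gcongr
          exact (div_le_one (by positivity)).mpr (lt_min_iff.mp hμbar).1.le
      _ = μ := mul_one μ
  have hgap : (μ + k) * (1 - E μ) - (k - μ) * E μ = μ - μbar * (1 - 2 * Phi (-μ / σ)) := by
    rw [hE]; field_simp; ring
  linarith
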